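/- arXiv:1905.00887 — 2 statements merged into one kernel-verified Lean document; each statement's English description precedes it below -/
import Mathlib

section
/- Let Θ : ℝ¹⁰ → ℝ be a smooth function of the variables (q, p, x¹, x², x³, x⁴, y¹, y², y³, y⁴). Suppose that Θ satisfies the six-dimensional heavenly equation Θ_{x^i y^j} − Θ_{x^j y^i} = {Θ_{x^i}, Θ_{x^j}}_{(q,p)} for every pair 1 ≤ i < j ≤ 4. Then for every fixed (q,p), the function Θ satisfies the TED equation: with ω_{ij} := Θ_{x^i y^j} − Θ_{x^j y^i}, one has ω₁₂ω₃₄ + ω₂₃ω₁₄ + ω₃₁ω₂₄ = 0 identically. -/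
noncomputable section

/-- `ℝ¹⁰` with coordinates `(q, p, x¹,…,x⁴, y¹,…,y⁴)`. -/
abbrev D10 : Type := ℝ × ℝ × (Fin 4 → ℝ) × (Fin 4 → ℝ)

/-- Directional (partial) derivative of `f` in the direction `v`. -/
def pdv {E : Type*} [NormedAddCommGroup E] [NormedSpace ℝ E]
    (v : E) (f : E → ℝ) (z : E) : ℝ := fderiv ℝ f z v

/-- Direction of the coordinate `q`. -/
def dq : D10 := (1, 0, 0, 0)
/-- Direction of the coordinate `p`. -/
def dp : D10 := (0, 1, 0, 0)
/-- Direction of the coordinate `x^i`. -/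
def dx (i : Fin 4) : D10 := (0, 0, Pi.single i 1, 0)
/-- Direction of the coordinate `y^i`. -/
def dy (i : Fin 4) : D10 := (0, 0, 0, Pi.single i 1)

/-- `ω_{ij} = Θ_{x^i y^j} − Θ_{x^j y^i}`. -/
def ωc (Θ : D10 → ℝ) (i j : Fin 4) (z : D10) : ℝ :=
  pdv (dx i) (pdv (dy j) Θ) z - pdv (dx j) (pdv (dy i) Θ) z

/-- if a smooth `Θ : ℝ¹⁰ → ℝ` satisfies the six-dimensional heavenly equation
`Θ_{x^i y^j} − Θ_{x^j y^i} = {Θ_{x^i}, Θ_{x^j}}_{(q,p)}` for all `1 ≤ i < j ≤ 4`, then it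
satisfies the TED equation `ω₁₂ω₃₄ + ω₂₃ω₁₄ + ω₃₁ω₂₄ = 0` identically. -/
theorem stmt2 (Θ : D10 → ℝ) (hΘ : ContDiff ℝ (⊤ : ℕ∞) Θ)
    (heav : ∀ i j : Fin 4, i < j → ∀ z : D10,
      ωc Θ i j z =
        pdv dq (pdv (dx i) Θ) z * pdv dp (pdv (dx j) Θ) z
          - pdv dp (pdv (dx i) Θ) z * pdv dq (pdv (dx j) Θ) z) :
    ∀ z : D10,
      ωc Θ 0 1 z * ωc Θ 2 3 z + ωc Θ 1 2 z * ωc Θ 0 3 z + ωc Θ 2 0 z * ωc Θ 1 3 z = 0 := by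
  intro z
  have h01 := heav 0 1 (by decide) z
  have h02 := heav 0 2 (by decide) z
  have h03 := heav 0 3 (by decide) z
  have h12 := heav 1 2 (by decide) z
  have h13 := heav 1 3 (by decide) z
  have h23 := heav 2 3 (by decide) z
  have h20 : ωc Θ 2 0 z = -(ωc Θ 0 2 z) := by unfold ωc; ring
  rw [h01, h23, h12, h03, h20, h02, h13]
  ring

end
end

section
/- Let Θ : ℝ¹⁰ → ℝ be smooth in (q, p, x¹,...,x⁴, y¹,...,y⁴), let λ ∈ ℝ, and fix distinct i, j ∈ {1,2,3,4}. Define first-order operators acting on smooth functions Ψ : ℝ¹⁰ → ℝ by L_m Ψ := Ψ_{y^m} − λΨ_{x^m} + Θ_{x^m q}Ψ_p − Θ_{x^m p}Ψ_q for m = i, j. If Θ satisfies the six-dimensional heavenly equation Θ_{x^i y^j} − Θ_{x^j y^i} = {Θ_{x^i}, Θ_{x^j}}_{(q,p)} identically, then the operators commute: L_i(L_j Ψ) = L_j(L_i Ψ) for every smooth Ψ and every λ ∈ ℝ. -/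
noncomputable section

section PdvLemmas

variable {E : Type*} [NormedAddCommGroup E] [NormedSpace ℝ E]

variable {f g : E → ℝ}

lemma contDiff_pdv (hf : ContDiff ℝ (⊤ : ℕ∞) f) (v : E) : ContDiff ℝ (⊤ : ℕ∞) (pdv v f) :=
  (hf.fderiv_right (by simp)).clm_apply contDiff_const

lemma pdv_sub (hf : Differentiable ℝ f) (hg : Differentiable ℝ g) (v : E) :
    pdv v (fun z => f z - g z) = fun z => pdv v f z - pdv v g z := by
  funext z
  simp only [pdv, fderiv_fun_sub (hf z) (hg z)]
  rfl

lemma pdv_add (hf : Differentiable ℝ f) (hg : Differentiable ℝ g) (v : E) :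
    pdv v (fun z => f z + g z) = fun z => pdv v f z + pdv v g z := by
  funext z
  simp only [pdv, fderiv_fun_add (hf z) (hg z)]
  rfl

lemma pdv_mul (hf : Differentiable ℝ f) (hg : Differentiable ℝ g) (v : E) :
    pdv v (fun z => f z * g z) = fun z => pdv v f z * g z + f z * pdv v g z := by
  funext z
  simp only [pdv, fderiv_fun_mul (hf z) (hg z)]
  simp [mul_comm]
  ring

lemma pdv_const_mul (hf : Differentiable ℝ f) (c : ℝ) (v : E) :
    pdv v (fun z => c * f z) = fun z => c * pdv v f z := by
  funext z
  simp only [pdv, fderiv_const_mul (hf z) c]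
  rfl

lemma pdv_pdv (hf : ContDiff ℝ (⊤ : ℕ∞) f) (u v : E) (z : E) :
    pdv u (pdv v f) z = fderiv ℝ (fderiv ℝ f) z u v := by
  have hd : DifferentiableAt ℝ (fderiv ℝ f) z :=
    ((hf.fderiv_right (m := (⊤ : ℕ∞)) (by simp)).differentiable (by simp)) z
  have h : pdv v f = fun y => (fderiv ℝ f y) v := rfl
  rw [pdv, h, fderiv_clm_apply hd (differentiableAt_const v)]
  simp

lemma pdv_comm (hf : ContDiff ℝ (⊤ : ℕ∞) f) (u v : E) :
    pdv u (pdv v f) = pdv v (pdv u f) := by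
  funext z
  rw [pdv_pdv hf, pdv_pdv hf]
  exact (hf.contDiffAt.isSymmSndFDerivAt (by simp [minSmoothness_of_isRCLikeNormedField]; exact WithTop.coe_le_coe.2 (le_top : (2 : ℕ∞) ≤ ⊤))) u v

lemma pdv_combo {A B C D F G : E → ℝ} (hA : Differentiable ℝ A) (hB : Differentiable ℝ B)
    (hC : Differentiable ℝ C) (hD : Differentiable ℝ D) (hF : Differentiable ℝ F)
    (hG : Differentiable ℝ G) (lam : ℝ) (u : E) :
    pdv u (fun w => A w - lam * B w + C w * D w - F w * G w) =
      fun z => pdv u A z - lam * pdv u B z + (pdv u C z * D z + C z * pdv u D z)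
        - (pdv u F z * G z + F z * pdv u G z) := by
  rw [pdv_sub (f := fun w => A w - lam * B w + C w * D w) (g := fun w => F w * G w) (((hA.sub (hB.const_mul lam))).add (hC.mul hD)) (hF.mul hG) u,
    pdv_add (f := fun w => A w - lam * B w) (g := fun w => C w * D w) (hA.sub (hB.const_mul lam)) (hC.mul hD) u,
    pdv_sub (g := fun w => lam * B w) hA (hB.const_mul lam) u, pdv_const_mul hB lam u,
    pdv_mul hC hD u, pdv_mul hF hG u]

end PdvLemmas

/-- The Lax operator `L_m Ψ = Ψ_{y^m} − λΨ_{x^m} + Θ_{x^m q}Ψ_p − Θ_{x^m p}Ψ_q`. -/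
def Lop (Θ : D10 → ℝ) (lam : ℝ) (m : Fin 4) (Ψ : D10 → ℝ) (z : D10) : ℝ :=
  pdv (dy m) Ψ z - lam * pdv (dx m) Ψ z
    + pdv dq (pdv (dx m) Θ) z * pdv dp Ψ z - pdv dp (pdv (dx m) Θ) z * pdv dq Ψ z

/-- if a smooth `Θ : ℝ¹⁰ → ℝ` satisfies the six-dimensional heavenly equation
`Θ_{x^i y^j} − Θ_{x^j y^i} = {Θ_{x^i}, Θ_{x^j}}_{(q,p)}` identically for fixed distinct
`i, j`, then the Lax operators commute, `L_i (L_j Ψ) = L_j (L_i Ψ)`, for every smooth `Ψ`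
and every `λ ∈ ℝ`. -/
theorem stmt9 (Θ : D10 → ℝ) (hΘ : ContDiff ℝ (⊤ : ℕ∞) Θ) (i j : Fin 4) (hij : i ≠ j)
    (heav : ∀ z : D10,
      pdv (dx i) (pdv (dy j) Θ) z - pdv (dx j) (pdv (dy i) Θ) z =
        pdv dq (pdv (dx i) Θ) z * pdv dp (pdv (dx j) Θ) z
          - pdv dp (pdv (dx i) Θ) z * pdv dq (pdv (dx j) Θ) z) :
    ∀ lam : ℝ, ∀ Ψ : D10 → ℝ, ContDiff ℝ (⊤ : ℕ∞) Ψ → ∀ z : D10,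
      Lop Θ lam i (Lop Θ lam j Ψ) z = Lop Θ lam j (Lop Θ lam i Ψ) z := by
  intro lam Ψ hΨ z
  -- differentiability facts
  have dΨ1 : ∀ v : D10, Differentiable ℝ (pdv v Ψ) :=
    fun v => (contDiff_pdv hΨ v).differentiable (by simp)
  have cΘ1 : ∀ v : D10, ContDiff ℝ (⊤ : ℕ∞) (pdv v Θ) := fun v => contDiff_pdv hΘ v
  have dΘ2 : ∀ u v : D10, Differentiable ℝ (pdv u (pdv v Θ)) :=
    fun u v => (contDiff_pdv (cΘ1 v) u).differentiable (by simp)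
  -- expansion of `pdv u (Lop Θ lam m Ψ)`
  have unf : ∀ (m : Fin 4) (Φ : D10 → ℝ), Lop Θ lam m Φ =
      fun w => pdv (dy m) Φ w - lam * pdv (dx m) Φ w
        + pdv dq (pdv (dx m) Θ) w * pdv dp Φ w - pdv dp (pdv (dx m) Θ) w * pdv dq Φ w :=
    fun m Φ => rfl
  have ex : ∀ (m : Fin 4) (u : D10),
      pdv u (fun w => pdv (dy m) Ψ w - lam * pdv (dx m) Ψ w
        + pdv dq (pdv (dx m) Θ) w * pdv dp Ψ w - pdv dp (pdv (dx m) Θ) w * pdv dq Ψ w) =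
      fun z => pdv u (pdv (dy m) Ψ) z - lam * pdv u (pdv (dx m) Ψ) z
        + (pdv u (pdv dq (pdv (dx m) Θ)) z * pdv dp Ψ z
            + pdv dq (pdv (dx m) Θ) z * pdv u (pdv dp Ψ) z)
        - (pdv u (pdv dp (pdv (dx m) Θ)) z * pdv dq Ψ z
            + pdv dp (pdv (dx m) Θ) z * pdv u (pdv dq Ψ) z) :=
    fun m u => pdv_combo (dΨ1 (dy m)) (dΨ1 (dx m)) (dΘ2 dq (dx m)) (dΨ1 dp)
      (dΘ2 dp (dx m)) (dΨ1 dq) lam u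
  -- third-derivative commutation lemmas for Θ
  have sw12 : ∀ u v w : D10, pdv u (pdv v (pdv w Θ)) = pdv v (pdv u (pdv w Θ)) :=
    fun u v w => pdv_comm (cΘ1 w) u v
  have rot : ∀ u v w : D10, pdv u (pdv v (pdv w Θ)) = pdv v (pdv w (pdv u Θ)) :=
    fun u v w => (sw12 u v w).trans (congrArg (pdv v) (pdv_comm hΘ u w))
  -- q- and p-derivatives of the heavenly equation
  have hfun : (fun z => pdv (dx i) (pdv (dy j) Θ) z - pdv (dx j) (pdv (dy i) Θ) z) =
      (fun z => pdv dq (pdv (dx i) Θ) z * pdv dp (pdv (dx j) Θ) z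
        - pdv dp (pdv (dx i) Θ) z * pdv dq (pdv (dx j) Θ) z) := funext heav
  have Hq := congrFun (congrArg (pdv dq) hfun) z
  have Hp := congrFun (congrArg (pdv dp) hfun) z
  rw [pdv_sub (dΘ2 (dx i) (dy j)) (dΘ2 (dx j) (dy i)) dq,
    pdv_sub (f := fun z => pdv dq (pdv (dx i) Θ) z * pdv dp (pdv (dx j) Θ) z) (g := fun z => pdv dp (pdv (dx i) Θ) z * pdv dq (pdv (dx j) Θ) z) ((dΘ2 dq (dx i)).mul (dΘ2 dp (dx j))) ((dΘ2 dp (dx i)).mul (dΘ2 dq (dx j))) dq,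
    pdv_mul (dΘ2 dq (dx i)) (dΘ2 dp (dx j)) dq,
    pdv_mul (dΘ2 dp (dx i)) (dΘ2 dq (dx j)) dq] at Hq
  rw [pdv_sub (dΘ2 (dx i) (dy j)) (dΘ2 (dx j) (dy i)) dp,
    pdv_sub (f := fun z => pdv dq (pdv (dx i) Θ) z * pdv dp (pdv (dx j) Θ) z) (g := fun z => pdv dp (pdv (dx i) Θ) z * pdv dq (pdv (dx j) Θ) z) ((dΘ2 dq (dx i)).mul (dΘ2 dp (dx j))) ((dΘ2 dp (dx i)).mul (dΘ2 dq (dx j))) dp,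
    pdv_mul (dΘ2 dq (dx i)) (dΘ2 dp (dx j)) dp,
    pdv_mul (dΘ2 dp (dx i)) (dΘ2 dq (dx j)) dp] at Hp
  simp only at Hq Hp
  -- canonicalize triple derivatives of Θ appearing in Hp
  rw [sw12 dp dq (dx i), sw12 dp dq (dx j)] at Hp
  -- expand the goal
  simp only [unf, ex]
  -- canonicalize second derivatives of Ψ
  rw [pdv_comm hΨ (dy i) (dx j), pdv_comm hΨ (dy i) dp, pdv_comm hΨ (dy i) dq,
    pdv_comm hΨ (dx i) dp, pdv_comm hΨ (dx i) dq, pdv_comm hΨ dp dq,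
    pdv_comm hΨ (dy j) (dy i), pdv_comm hΨ (dy j) (dx i), pdv_comm hΨ (dy j) dp,
    pdv_comm hΨ (dy j) dq, pdv_comm hΨ (dx j) (dx i), pdv_comm hΨ (dx j) dp,
    pdv_comm hΨ (dx j) dq]
  -- canonicalize third derivatives of Θ
  rw [rot (dy i) dq (dx j), rot (dy i) dp (dx j), rot (dy j) dq (dx i),
    rot (dx j) dq (dx i), rot (dy j) dp (dx i), rot (dx j) dp (dx i),
    sw12 (dx i) dq (dx j), sw12 dp dq (dx j), sw12 (dx i) dp (dx j), sw12 dp dq (dx i)]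
  linear_combination (-(pdv dp Ψ z)) * Hq + (pdv dq Ψ z) * Hp

end
end
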